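/- Under the SGD setup with f satisfying the Polyak–Łojasiewicz inequality with constant μ > 0, with constant adjustment factors ψ_k = 1 and constant mini-batch size b_k = b, if 0 < h ≤ 1/L then for every k ≥ 0: E[f(x_k) − f(x⋆)] ≤ (1 − hμ)^k · (f(x₀) − f(x⋆)) + L d σ⋆² h / (2 b μ); in particular limsup_{k→∞} E[f(x_k) − f(x⋆)] ≤ L d σ⋆² h / (2 μ b). -/

import Mathlib

/-!
The descent lemma for the `L`-smooth `f` at the step `x - h 𝒢`, with `𝒢` split into `∇f(x)` and the
noise `𝒢 - ∇f(x)`, bounds `f(x_{k+1})`. In expectation the cross term `⟪∇f(x_k), 𝒢_k - ∇f(x_k)⟫`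
vanishes, because `∇f(x_k)` is `F_k`-measurable and the noise has zero conditional mean. With
`h ≤ 1/L`, the PL inequality and the variance bound, the gap `A_k = E[f(x_k) - f(x⋆)]` then obeys
`A_{k+1} ≤ (1 - hμ) A_k + L h² d σ⋆² / (2b)`, a contraction with fixed point `L d σ⋆² h / (2 b μ)`.
-/

open MeasureTheory Filter
open scoped Gradient InnerProductSpace Topology

section LinearRecursion

theorem le_pow_mul_add_of_le_mul_add {a : ℕ → ℝ} {q c : ℝ} (hq0 : 0 ≤ q) (hq1 : q < 1)
    (hc : 0 ≤ c) (ha : ∀ k, a (k + 1) ≤ q * a k + c) (k : ℕ) :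
    a k ≤ q ^ k * a 0 + c / (1 - q) := by
  have hq : 0 < 1 - q := sub_pos.2 hq1
  induction k with
  | zero => simpa using div_nonneg hc hq.le
  | succ k ih =>
    calc a (k + 1) ≤ q * (q ^ k * a 0 + c / (1 - q)) + c := (ha k).trans (by gcongr)
      _ = q ^ (k + 1) * a 0 + c / (1 - q) := by field_simp; ring

theorem limsup_le_of_le_pow_mul_add {a : ℕ → ℝ} {q a₀ D c : ℝ} (hq0 : 0 ≤ q) (hq1 : q < 1)
    (hlow : ∀ k, c ≤ a k) (ha : ∀ k, a k ≤ q ^ k * a₀ + D) : limsup a atTop ≤ D := by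
  have hlim : Tendsto (fun k => q ^ k * a₀ + D) atTop (𝓝 D) := by
    simpa using ((tendsto_pow_atTop_nhds_zero_of_lt_one hq0 hq1).mul_const a₀).add_const D
  calc limsup a atTop ≤ limsup (fun k => q ^ k * a₀ + D) atTop :=
        limsup_le_limsup (.of_forall ha) (isCoboundedUnder_le_of_le atTop hlow)
          hlim.isBoundedUnder_le
    _ = D := hlim.limsup_eq

end LinearRecursion

section Smooth

variable {F : Type*} [NormedAddCommGroup F] [InnerProductSpace ℝ F] [CompleteSpace F]
  {f : F → ℝ} {L : ℝ} {xstar : F}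

theorem descent_lemma (hf : Differentiable ℝ f)
    (hL : ∀ x y, ‖∇ f x - ∇ f y‖ ≤ L * ‖x - y‖) (x y : F) :
    f y ≤ f x + ⟪∇ f x, y - x⟫_ℝ + L / 2 * ‖y - x‖ ^ 2 := by
  set v := y - x
  -- `g 1 ≤ g 0` is the claim, and `g` is antitone on `[0, 1]`
  let g : ℝ → ℝ := fun t => f (x + t • v) - t * ⟪∇ f x, v⟫_ℝ - L / 2 * t ^ 2 * ‖v‖ ^ 2
  have hg : ∀ t, HasDerivAt g (⟪∇ f (x + t • v) - ∇ f x, v⟫_ℝ - L * t * ‖v‖ ^ 2) t := by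
    intro t
    have hline : HasDerivAt (fun t : ℝ => x + t • v) v t := by
      simpa using ((hasDerivAt_id t).smul_const v).const_add x
    refine ((((hf _).hasFDerivAt.comp_hasDerivAt t hline).sub
      ((hasDerivAt_id t).mul_const ⟪∇ f x, v⟫_ℝ)).sub
      (((hasDerivAt_pow 2 t).const_mul (L / 2)).mul_const (‖v‖ ^ 2))).congr_deriv ?_
    simp only [inner_sub_left, inner_gradient_left, Nat.cast_ofNat]
    ring
  have hg' : ∀ t ∈ interior (Set.Icc (0 : ℝ) 1), deriv g t ≤ 0 := by
    intro t ht
    rw [interior_Icc] at ht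
    rw [(hg t).deriv]
    calc ⟪∇ f (x + t • v) - ∇ f x, v⟫_ℝ - L * t * ‖v‖ ^ 2
        ≤ ‖∇ f (x + t • v) - ∇ f x‖ * ‖v‖ - L * t * ‖v‖ ^ 2 := by
          gcongr; exact real_inner_le_norm _ _
      _ ≤ L * ‖x + t • v - x‖ * ‖v‖ - L * t * ‖v‖ ^ 2 := by gcongr; exact hL _ _
      _ = 0 := by rw [add_sub_cancel_left, norm_smul, Real.norm_of_nonneg ht.1.le]; ring
  have := antitoneOn_of_deriv_nonpos (convex_Icc 0 1)
    (fun t _ => (hg t).continuousAt.continuousWithinAt)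
    (fun t _ => (hg t).differentiableAt.differentiableWithinAt) hg'
    (Set.left_mem_Icc.2 zero_le_one) (Set.right_mem_Icc.2 zero_le_one) zero_le_one
  simp only [g, v, one_smul, add_sub_cancel, zero_smul, add_zero] at this
  linarith

theorem descent_lemma_sub_smul (hf : Differentiable ℝ f)
    (hL : ∀ x y, ‖∇ f x - ∇ f y‖ ≤ L * ‖x - y‖) (x v : F) (h : ℝ) :
    f (x - h • v) ≤ f x - (h - L * h ^ 2 / 2) * ‖∇ f x‖ ^ 2
      - (h - L * h ^ 2) * ⟪∇ f x, v - ∇ f x⟫_ℝ + L * h ^ 2 / 2 * ‖v - ∇ f x‖ ^ 2 := by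
  obtain ⟨e, rfl⟩ : ∃ e, v = ∇ f x + e := ⟨v - ∇ f x, by abel⟩
  have := descent_lemma hf hL x (x - h • (∇ f x + e))
  rw [sub_sub_cancel_left, inner_neg_right, norm_neg, norm_smul, mul_pow, Real.norm_eq_abs,
    sq_abs, norm_add_sq_real, real_inner_smul_right, inner_add_right,
    real_inner_self_eq_norm_sq] at this
  rw [add_sub_cancel_left]
  linear_combination this

theorem IsLocalMin.gradient_eq_zero (h : IsLocalMin f xstar) : ∇ f xstar = 0 := by
  simp [gradient, h.fderiv_eq_zero]

theorem norm_gradient_le_of_forall_le (hL : ∀ x y, ‖∇ f x - ∇ f y‖ ≤ L * ‖x - y‖)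
    (hmin : ∀ z, f xstar ≤ f z) (z : F) : ‖∇ f z‖ ≤ L * ‖z - xstar‖ := by
  simpa [((isMinOn_univ_iff.2 hmin).isLocalMin univ_mem).gradient_eq_zero] using hL z xstar

theorem sub_le_half_mul_sq_of_forall_le (hf : Differentiable ℝ f)
    (hL : ∀ x y, ‖∇ f x - ∇ f y‖ ≤ L * ‖x - y‖) (hmin : ∀ z, f xstar ≤ f z) (z : F) :
    f z - f xstar ≤ L / 2 * ‖z - xstar‖ ^ 2 := by
  have := descent_lemma hf hL xstar z
  rw [((isMinOn_univ_iff.2 hmin).isLocalMin univ_mem).gradient_eq_zero, inner_zero_left] at this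
  linarith

theorem norm_gradient_sq_le_of_forall_le (hf : Differentiable ℝ f)
    (hL : ∀ x y, ‖∇ f x - ∇ f y‖ ≤ L * ‖x - y‖) (hL0 : 0 < L) (hmin : ∀ z, f xstar ≤ f z)
    (z : F) : ‖∇ f z‖ ^ 2 ≤ 2 * L * (f z - f xstar) := by
  -- compare `f xstar` with `f` at the gradient step `z - L⁻¹ ∇f(z)`
  have := (hmin _).trans (descent_lemma_sub_smul hf hL z (∇ f z) L⁻¹)
  simp only [sub_self, inner_zero_right, norm_zero] at this
  have hL' : (L⁻¹ - L * L⁻¹ ^ 2 / 2) * (2 * L) = 1 := by field_simp; ring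
  linear_combination (2 * L) * this - ‖∇ f z‖ ^ 2 * hL'

theorem pl_const_le_of_ne (hf : Differentiable ℝ f)
    (hL : ∀ x y, ‖∇ f x - ∇ f y‖ ≤ L * ‖x - y‖) (hL0 : 0 < L) (hmin : ∀ z, f xstar ≤ f z)
    {μpl : ℝ} (hpl : ∀ z, 2 * μpl * (f z - f xstar) ≤ ‖∇ f z‖ ^ 2) {z : F}
    (hz : f z ≠ f xstar) : μpl ≤ L := by
  have := (hpl z).trans (norm_gradient_sq_le_of_forall_le hf hL hL0 hmin z)
  nlinarith [sub_pos.2 ((hmin z).lt_of_ne' hz)]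

theorem continuous_gradient_of_norm_sub_le (hL : ∀ x y, ‖∇ f x - ∇ f y‖ ≤ L * ‖x - y‖) :
    Continuous (∇ f) :=
  (LipschitzWith.of_dist_le' fun x y => by simpa only [dist_eq_norm] using hL x y).continuous

end Smooth

section Stochastic

variable {Ω F : Type*} {m m₀ : MeasurableSpace Ω} {μ : Measure Ω}
  [NormedAddCommGroup F] [InnerProductSpace ℝ F]

theorem MeasureTheory.MemLp.integrable_inner {c e : Ω → F} (hc : MemLp c 2 μ)
    (he : MemLp e 2 μ) :
    Integrable (fun ω => ⟪c ω, e ω⟫_ℝ) μ :=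
  (L2.integrable_inner (𝕜 := ℝ) (hc.toLp c) (he.toLp e)).congr <| by
    filter_upwards [hc.coeFn_toLp, he.coeFn_toLp] with ω hcω heω
    rw [hcω, heω]

theorem memLp_iterate_sub_smul {p : ENNReal} {x G : ℕ → Ω → F} {h : ℝ} (hx0 : MemLp (x 0) p μ)
    (hG : ∀ k, MemLp (G k) p μ) (hupdate : ∀ k ω, x (k + 1) ω = x k ω - h • G k ω) (k : ℕ) :
    MemLp (x k) p μ := by
  induction k with
  | zero => exact hx0
  | succ k ih =>
    rw [show x (k + 1) = x k - h • G k from funext (hupdate k)]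
    exact ih.sub ((hG k).const_smul h)

theorem integral_le_of_ae_condExp_le [IsProbabilityMeasure μ] (hm : m ≤ m₀) {g : Ω → ℝ} {c : ℝ}
    (hg : ∀ᵐ ω ∂μ, μ[g | m] ω ≤ c) : ∫ ω, g ω ∂μ ≤ c := by
  rw [← integral_condExp hm]
  calc ∫ ω, μ[g | m] ω ∂μ ≤ ∫ _, c ∂μ := integral_mono_ae integrable_condExp (integrable_const c) hg
    _ = c := by simp

variable [CompleteSpace F]

theorem integral_inner_sub_eq_zero_of_condExp_ae_eq [IsFiniteMeasure μ] (hm : m ≤ m₀)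
    {c G : Ω → F} (hc : StronglyMeasurable[m] c) (hc2 : MemLp c 2 μ) (hG2 : MemLp G 2 μ)
    (hGc : μ[G | m] =ᵐ[μ] c) : ∫ ω, ⟪c ω, G ω - c ω⟫_ℝ ∂μ = 0 := by
  have hc1 := hc2.integrable one_le_two
  have hG1 := hG2.integrable one_le_two
  have hnoise : μ[G - c | m] =ᵐ[μ] 0 := by
    filter_upwards [condExp_sub hG1 hc1 m, hGc] with ω hsub hGω
    rw [hsub, Pi.sub_apply, hGω, condExp_of_stronglyMeasurable hm hc hc1, Pi.zero_apply, sub_self]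
  have hpull := condExp_bilin_of_stronglyMeasurable_left (innerSL ℝ) hc
    (hc2.integrable_inner (hG2.sub hc2)) (hG1.sub hc1)
  calc ∫ ω, ⟪c ω, G ω - c ω⟫_ℝ ∂μ = ∫ ω, μ[fun ω => ⟪c ω, G ω - c ω⟫_ℝ | m] ω ∂μ :=
        (integral_condExp hm).symm
    _ = ∫ _, (0 : ℝ) ∂μ := integral_congr_ae <| by
        filter_upwards [hpull, hnoise] with ω hpullω hnoiseω
        exact hpullω.trans (by rw [hnoiseω]; simp)
    _ = 0 := integral_zero _ _

end Stochastic

section SGDStep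

variable {Ω F : Type*} {m m₀ : MeasurableSpace Ω} {μ : Measure Ω} [IsFiniteMeasure μ]
  [NormedAddCommGroup F] [InnerProductSpace ℝ F] [CompleteSpace F]
  {f : F → ℝ} {L : ℝ} {xstar : F}

theorem MeasureTheory.MemLp.gradient_comp (hL : ∀ x y, ‖∇ f x - ∇ f y‖ ≤ L * ‖x - y‖)
    (hmin : ∀ z, f xstar ≤ f z) {x : Ω → F} (hx : MemLp x 2 μ) :
    MemLp (fun ω => ∇ f (x ω)) 2 μ :=
  (hx.sub (memLp_const xstar)).of_le_mul
    ((continuous_gradient_of_norm_sub_le hL).comp_aestronglyMeasurable hx.1)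
    (.of_forall fun ω => norm_gradient_le_of_forall_le hL hmin (x ω))

theorem integrable_sub_comp_of_memLp (hf : Differentiable ℝ f)
    (hL : ∀ x y, ‖∇ f x - ∇ f y‖ ≤ L * ‖x - y‖) (hmin : ∀ z, f xstar ≤ f z) {x : Ω → F}
    (hx : MemLp x 2 μ) : Integrable (fun ω => f (x ω) - f xstar) μ := by
  have hx' := hx.sub (memLp_const xstar)
  refine (((memLp_two_iff_integrable_sq_norm hx'.1).1 hx').const_mul (L / 2)).mono'
    ((hf.continuous.comp_aestronglyMeasurable hx.1).sub aestronglyMeasurable_const)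
    (.of_forall fun ω => ?_)
  rw [Real.norm_of_nonneg (sub_nonneg.2 (hmin _))]
  exact sub_le_half_mul_sq_of_forall_le hf hL hmin (x ω)

theorem integral_sub_le_of_sgd_step (hm : m ≤ m₀) (hf : Differentiable ℝ f)
    (hL : ∀ x y, ‖∇ f x - ∇ f y‖ ≤ L * ‖x - y‖) (hmin : ∀ z, f xstar ≤ f z) {x G : Ω → F}
    (hx : StronglyMeasurable[m] x) (hx2 : MemLp x 2 μ) (hG2 : MemLp G 2 μ)
    (hGmean : μ[G | m] =ᵐ[μ] fun ω => ∇ f (x ω)) (h : ℝ) :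
    ∫ ω, (f (x ω - h • G ω) - f xstar) ∂μ ≤ ∫ ω, (f (x ω) - f xstar) ∂μ
      - (h - L * h ^ 2 / 2) * ∫ ω, ‖∇ f (x ω)‖ ^ 2 ∂μ
      + L * h ^ 2 / 2 * ∫ ω, ‖G ω - ∇ f (x ω)‖ ^ 2 ∂μ := by
  have hg2 := hx2.gradient_comp hL hmin
  have hgm : StronglyMeasurable[m] fun ω => ∇ f (x ω) :=
    (continuous_gradient_of_norm_sub_le hL).comp_stronglyMeasurable hx
  have hcross := integral_inner_sub_eq_zero_of_condExp_ae_eq hm hgm hg2 hG2 hGmean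
  have i₀ := integrable_sub_comp_of_memLp hf hL hmin hx2
  have i₁ := integrable_sub_comp_of_memLp hf hL hmin (hx2.sub (hG2.const_smul h))
  have i₂ := ((memLp_two_iff_integrable_sq_norm hg2.1).1 hg2).const_mul (h - L * h ^ 2 / 2)
  have i₃ := (hg2.integrable_inner (hG2.sub hg2)).const_mul (h - L * h ^ 2)
  have i₄ := ((memLp_two_iff_integrable_sq_norm (hG2.sub hg2).1).1 (hG2.sub hg2)).const_mul
    (L * h ^ 2 / 2)
  calc ∫ ω, (f (x ω - h • G ω) - f xstar) ∂μ
      ≤ ∫ ω, (f (x ω) - f xstar - (h - L * h ^ 2 / 2) * ‖∇ f (x ω)‖ ^ 2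
          - (h - L * h ^ 2) * ⟪∇ f (x ω), G ω - ∇ f (x ω)⟫_ℝ
          + L * h ^ 2 / 2 * ‖G ω - ∇ f (x ω)‖ ^ 2) ∂μ :=
        integral_mono i₁ (((i₀.sub i₂).sub i₃).add i₄) fun ω => by
          linarith [descent_lemma_sub_smul hf hL (x ω) (G ω) h]
    _ = _ := by
        rw [integral_add, integral_sub, integral_sub, integral_const_mul, integral_const_mul,
          integral_const_mul, hcross, mul_zero, sub_zero]
        all_goals fun_prop

theorem integral_sub_le_of_sgd_step_of_pl (hm : m ≤ m₀) (hf : Differentiable ℝ f)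
    (hL : ∀ x y, ‖∇ f x - ∇ f y‖ ≤ L * ‖x - y‖) (hmin : ∀ z, f xstar ≤ f z) {μpl : ℝ}
    (hpl : ∀ z, 2 * μpl * (f z - f xstar) ≤ ‖∇ f z‖ ^ 2) {x G : Ω → F}
    (hx : StronglyMeasurable[m] x) (hx2 : MemLp x 2 μ) (hG2 : MemLp G 2 μ)
    (hGmean : μ[G | m] =ᵐ[μ] fun ω => ∇ f (x ω)) {h V : ℝ} (hh : 0 < h) (hhL : h ≤ 1 / L)
    (hV : ∫ ω, ‖G ω - ∇ f (x ω)‖ ^ 2 ∂μ ≤ V) :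
    ∫ ω, (f (x ω - h • G ω) - f xstar) ∂μ
      ≤ (1 - h * μpl) * ∫ ω, (f (x ω) - f xstar) ∂μ + L * h ^ 2 / 2 * V := by
  have hL0 : 0 < L := one_div_pos.1 (hh.trans_le hhL)
  have hLh : L * h ≤ 1 := by rwa [le_div_iff₀ hL0, mul_comm] at hhL
  have hg2 := (memLp_two_iff_integrable_sq_norm (hx2.gradient_comp hL hmin).1).1
    (hx2.gradient_comp hL hmin)
  have hPL : 2 * μpl * ∫ ω, (f (x ω) - f xstar) ∂μ ≤ ∫ ω, ‖∇ f (x ω)‖ ^ 2 ∂μ := by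
    rw [← integral_const_mul]
    exact integral_mono ((integrable_sub_comp_of_memLp hf hL hmin hx2).const_mul _) hg2
      fun ω => hpl (x ω)
  have hcoef : h / 2 ≤ h - L * h ^ 2 / 2 := by nlinarith
  nlinarith [integral_sub_le_of_sgd_step hm hf hL hmin hx hx2 hG2 hGmean h,
    mul_le_mul_of_nonneg_right hcoef (integral_nonneg (μ := μ) fun ω => sq_nonneg ‖∇ f (x ω)‖),
    mul_le_mul_of_nonneg_left hV (by positivity : 0 ≤ L * h ^ 2 / 2),
    mul_le_mul_of_nonneg_left hPL (by positivity : 0 ≤ h / 2)]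

end SGDStep

/-- **Ball of convergence for constant-stepsize mini-batch SGD on Polyak–Łojasiewicz
functions.** With constant adjustment factors `ψ_k = 1` and constant mini-batch size `b`,
if `0 < h ≤ 1/L` then for every `k`,
`E[f(x_k) − f(x⋆)] ≤ (1 − hμ)^k (f(x₀) − f(x⋆)) + L d σ⋆² h/(2 b μ)`,
and in particular `limsup_{k→∞} E[f(x_k) − f(x⋆)] ≤ L d σ⋆² h/(2 μ b)`. -/
theorem sgd_constant_step_pl_ball_of_convergence
    {Ω : Type*} {m0 : MeasurableSpace Ω} {μ : Measure Ω} [IsProbabilityMeasure μ]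
    {d : ℕ} (f : EuclideanSpace ℝ (Fin d) → ℝ) (L : ℝ)
    (hf : ContDiff ℝ 1 f)
    (hL : ∀ x y : EuclideanSpace ℝ (Fin d), ‖gradient f x - gradient f y‖ ≤ L * ‖x - y‖)
    (xstar : EuclideanSpace ℝ (Fin d)) (hmin : ∀ x, f xstar ≤ f x)
    (μpl : ℝ) (hμpl : 0 < μpl)
    (hpl : ∀ z : EuclideanSpace ℝ (Fin d), 2 * μpl * (f z - f xstar) ≤ ‖gradient f z‖ ^ 2)
    (ℱ : Filtration ℕ m0)
    (x G : ℕ → Ω → EuclideanSpace ℝ (Fin d))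
    (x0 : EuclideanSpace ℝ (Fin d)) (hx0 : x 0 = fun _ => x0)
    (hx_meas : ∀ k, Measurable[ℱ k] (x k))
    (σsq : ℝ) (hσsq : 0 ≤ σsq)
    (b : ℝ) (hb : 1 ≤ b)
    (h : ℝ) (hh : 0 < h)
    (hupdate : ∀ k ω, x (k + 1) ω = x k ω - h • G k ω)
    (hG2 : ∀ k, MemLp (G k) 2 μ)
    (hGmean : ∀ k, μ[G k | ℱ k] =ᵐ[μ] fun ω => gradient f (x k ω))
    (hGvar : ∀ k, ∀ᵐ ω ∂μ,
      (μ[fun ω' => ‖G k ω' - gradient f (x k ω')‖ ^ 2 | ℱ k]) ω ≤ d * σsq / b)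
    (hhL : h ≤ 1 / L) :
    (∀ k : ℕ, ∫ ω, (f (x k ω) - f xstar) ∂μ ≤
        (1 - h * μpl) ^ k * (f x0 - f xstar) + L * d * σsq * h / (2 * b * μpl)) ∧
      limsup (fun k : ℕ => ∫ ω, (f (x k ω) - f xstar) ∂μ) atTop ≤
        L * d * σsq * h / (2 * μpl * b) := by
  have hdiff := hf.differentiable one_ne_zero
  have hL0 : 0 < L := one_div_pos.1 (hh.trans_le hhL)
  -- a constant `f` satisfies PL for every `μpl`; otherwise `μpl ≤ L`, so `1 - h μpl ≥ 0`
  by_cases hconst : ∀ z, f z = f xstar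
  · simp only [hconst, sub_self, integral_zero, mul_zero, zero_add, limsup_const]
    exact ⟨fun _ => by positivity, by positivity⟩
  push Not at hconst
  obtain ⟨z, hz⟩ := hconst
  have hq0 : 0 ≤ 1 - h * μpl := by
    have := pl_const_le_of_ne hdiff hL hL0 hmin hpl hz
    rw [le_div_iff₀ hL0] at hhL
    nlinarith
  have hx2 := memLp_iterate_sub_smul (hx0 ▸ memLp_const x0) hG2 hupdate
  have hrec (k : ℕ) : ∫ ω, (f (x (k + 1) ω) - f xstar) ∂μ
      ≤ (1 - h * μpl) * ∫ ω, (f (x k ω) - f xstar) ∂μ + L * h ^ 2 / 2 * (d * σsq / b) := by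
    simp only [hupdate k]
    exact integral_sub_le_of_sgd_step_of_pl (ℱ.le k) hdiff hL hmin hpl
      (hx_meas k).stronglyMeasurable (hx2 k) (hG2 k) (hGmean k) hh hhL
      (integral_le_of_ae_condExp_le (ℱ.le k) (hGvar k))
  have hq1 : 1 - h * μpl < 1 := by linarith [mul_pos hh hμpl]
  have hbound := le_pow_mul_add_of_le_mul_add (a := fun k => ∫ ω, (f (x k ω) - f xstar) ∂μ)
    hq0 hq1 (by positivity) hrec
  simp only [hx0, integral_const, probReal_univ, one_smul, sub_sub_cancel] at hbound
  have hball : L * h ^ 2 / 2 * (d * σsq / b) / (h * μpl) = L * d * σsq * h / (2 * b * μpl) := by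
    field_simp
  rw [hball] at hbound
  refine ⟨hbound, (limsup_le_of_le_pow_mul_add hq0 hq1
    (fun k => integral_nonneg fun ω => sub_nonneg.2 (hmin (x k ω))) hbound).trans_eq (by ring)⟩
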